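/- Let x_1, …, x_T ∈ ℝ^N (T ≥ 1) and suppose the sample covariance C := (1/T) Σ_{t=1}^T x_t x_tᵀ is positive definite. Define y*_t := C^{-1/2} x_t for each t, where C^{-1/2} is the inverse of the positive definite square root of C. Then: (i) (1/T) Σ_{t=1}^T y*_t (y*_t)ᵀ = I_N; (ii) for every family y_1, …, y_T ∈ ℝ^N satisfying (1/T) Σ_{t=1}^T y_t y_tᵀ = I_N, one has Σ_{t=1}^T ‖x_t − y*_t‖² ≤ Σ_{t=1}^T ‖x_t − y_t‖²; and (iii) equality in (ii) holds if and only if y_t = y*_t for all t. -/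

import Mathlib

open Matrix BigOperators

noncomputable section

section OldSqrt

open scoped ComplexOrder

/-- The square root of a positive semidefinite matrix, as defined in Mathlib (Dec 2024)
under the name `Matrix.PosSemidef.sqrt` (removed since). -/
def Matrix.PosSemidef.sqrt {n : Type*} [Fintype n] [DecidableEq n] {𝕜 : Type*} [RCLike 𝕜]
    {A : Matrix n n 𝕜} (hA : A.PosSemidef) : Matrix n n 𝕜 :=
  hA.1.eigenvectorUnitary.1 * diagonal ((↑) ∘ (√·) ∘ hA.1.eigenvalues) *
  (star hA.1.eigenvectorUnitary : Matrix n n 𝕜)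

end OldSqrt

/-! Write `S = C^{1/2}`, so that `xₜ = S y*ₜ`. Since `Σₜ zₜᵀ A zₜ = tr (A Σₜ zₜ zₜᵀ)`, every
quadratic form has the same sum over two families with the same scatter matrix `Σₜ zₜ zₜᵀ`, such
as `y` and `y*`. Expanding the squares with this gives
`Σₜ ‖xₜ - yₜ‖² = Σₜ ‖xₜ - y*ₜ‖² + Σₜ (yₜ - y*ₜ)ᵀ S (yₜ - y*ₜ)`,
and the last sum is positive unless `y = y*` because `S` is positive definite. -/

namespace Matrix

section Sqrt

open scoped ComplexOrder

variable {n 𝕜 : Type*} [Fintype n] [DecidableEq n] [RCLike 𝕜] {A : Matrix n n 𝕜}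

theorem PosSemidef.sqrt_mul_self (hA : A.PosSemidef) : hA.sqrt * hA.sqrt = A := by
  set U : Matrix n n 𝕜 := hA.1.eigenvectorUnitary.1
  set D : Matrix n n 𝕜 := diagonal ((↑) ∘ (√·) ∘ hA.1.eigenvalues)
  have hU : star U * U = 1 := Unitary.star_mul_self_of_mem hA.1.eigenvectorUnitary.2
  have hD : D * D = diagonal ((↑) ∘ hA.1.eigenvalues) := by
    rw [diagonal_mul_diagonal]
    congr 1; funext i
    simp [← RCLike.ofReal_mul, Real.mul_self_sqrt (hA.eigenvalues_nonneg i)]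
  calc hA.sqrt * hA.sqrt = U * (D * (star U * U) * D) * star U := by
        simp only [PosSemidef.sqrt, U, D, Matrix.mul_assoc]
    _ = A := by
        rw [hU, Matrix.mul_one, hD]
        conv_rhs => rw [hA.1.spectral_theorem, Unitary.conjStarAlgAut_apply]

theorem PosDef.posDef_sqrt (hA : A.PosDef) : hA.posSemidef.sqrt.PosDef := by
  rw [PosSemidef.sqrt, Unitary.isUnit_coe.posDef_star_right_conjugate_iff, posDef_diagonal_iff]
  intro i
  simpa using hA.eigenvalues_pos i

end Sqrt

section Scatter

variable {ι m n R : Type*} [Fintype ι] [Fintype n] [CommRing R]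

theorem sum_dotProduct_mulVec_eq_trace (z : ι → n → R) (A : Matrix n n R) :
    ∑ t, z t ⬝ᵥ A *ᵥ z t = trace (A * ∑ t, vecMulVec (z t) (z t)) := by
  simp only [Matrix.mul_sum, trace_sum, mul_vecMulVec, trace_vecMulVec, dotProduct_comm]

theorem sum_vecMulVec_mulVec (A : Matrix m n R) (z : ι → n → R) :
    ∑ t, vecMulVec (A *ᵥ z t) (A *ᵥ z t) = A * (∑ t, vecMulVec (z t) (z t)) * Aᵀ := by
  simp only [Matrix.mul_sum, Matrix.sum_mul, mul_vecMulVec, vecMulVec_mul, vecMul_transpose]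

/-- The last two brackets vanish after summing over a family `a` with the same scatter matrix
as `b`. -/
theorem dotProduct_self_mulVec_sub (S : Matrix n n R) (hS : S.IsSymm) (a b : n → R) :
    (S *ᵥ b - a) ⬝ᵥ (S *ᵥ b - a) =
      (S *ᵥ b - b) ⬝ᵥ (S *ᵥ b - b) + (a - b) ⬝ᵥ S *ᵥ (a - b) +
        (a ⬝ᵥ a - b ⬝ᵥ b) - (a ⬝ᵥ S *ᵥ a - b ⬝ᵥ S *ᵥ b) := by
  have hba : b ⬝ᵥ S *ᵥ a = a ⬝ᵥ S *ᵥ b := by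
    rw [dotProduct_mulVec, ← mulVec_transpose, hS.eq, dotProduct_comm]
  simp only [sub_dotProduct, dotProduct_sub, mulVec_sub, dotProduct_comm (S *ᵥ b) a,
    dotProduct_comm (S *ᵥ b) b, hba]
  ring

theorem sum_dotProduct_self_sub_eq_of_sum_vecMulVec_eq [DecidableEq n] {S : Matrix n n R}
    (hS : S.IsSymm) {x a b : ι → n → R} (hx : ∀ t, x t = S *ᵥ b t)
    (hab : ∑ t, vecMulVec (a t) (a t) = ∑ t, vecMulVec (b t) (b t)) :
    ∑ t, (x t - a t) ⬝ᵥ (x t - a t) =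
      ∑ t, (x t - b t) ⬝ᵥ (x t - b t) + ∑ t, (a t - b t) ⬝ᵥ S *ᵥ (a t - b t) := by
  have hsum (A : Matrix n n R) : ∑ t, a t ⬝ᵥ A *ᵥ a t = ∑ t, b t ⬝ᵥ A *ᵥ b t := by
    rw [sum_dotProduct_mulVec_eq_trace, sum_dotProduct_mulVec_eq_trace, hab]
  have hsum_one := hsum 1
  simp only [one_mulVec] at hsum_one
  obtain rfl : x = fun t => S *ᵥ b t := funext hx
  rw [Finset.sum_congr rfl fun t _ => dotProduct_self_mulVec_sub S hS (a t) (b t)]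
  simp only [Finset.sum_add_distrib, Finset.sum_sub_distrib, hsum_one, hsum S]
  ring

end Scatter

section Real

variable {ι n : Type*} [Fintype ι] [Fintype n] {S : Matrix n n ℝ}

theorem PosSemidef.sum_dotProduct_mulVec_nonneg (hS : S.PosSemidef) (z : ι → n → ℝ) :
    0 ≤ ∑ t, z t ⬝ᵥ S *ᵥ z t :=
  Finset.sum_nonneg fun t _ => by simpa using hS.dotProduct_mulVec_nonneg (z t)

theorem PosDef.sum_dotProduct_mulVec_eq_zero_iff (hS : S.PosDef) (z : ι → n → ℝ) :
    ∑ t, z t ⬝ᵥ S *ᵥ z t = 0 ↔ z = 0 := by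
  refine ⟨fun h => funext fun t => ?_, fun h => by simp [h]⟩
  have hnonneg (t : ι) : 0 ≤ z t ⬝ᵥ S *ᵥ z t := by
    simpa using hS.posSemidef.dotProduct_mulVec_nonneg (z t)
  have hzero := (Finset.sum_eq_zero_iff_of_nonneg fun t _ => hnonneg t).mp h t (Finset.mem_univ t)
  by_contra hne
  simpa [hzero] using hS.dotProduct_mulVec_pos hne

theorem PosDef.sum_dotProduct_self_sub_le_and_eq_iff [DecidableEq n] (hS : S.PosDef)
    {x a b : ι → n → ℝ} (hx : ∀ t, x t = S *ᵥ b t)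
    (hab : ∑ t, vecMulVec (a t) (a t) = ∑ t, vecMulVec (b t) (b t)) :
    (∑ t, (x t - b t) ⬝ᵥ (x t - b t) ≤ ∑ t, (x t - a t) ⬝ᵥ (x t - a t)) ∧
      (∑ t, (x t - b t) ⬝ᵥ (x t - b t) = ∑ t, (x t - a t) ⬝ᵥ (x t - a t) ↔ a = b) := by
  have hS_symm : S.IsSymm := isHermitian_iff_isSymm.mp hS.isHermitian
  have hnonneg := hS.posSemidef.sum_dotProduct_mulVec_nonneg (a - b)
  have hzero := hS.sum_dotProduct_mulVec_eq_zero_iff (a - b)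
  simp only [Pi.sub_apply, sub_eq_zero] at hnonneg hzero
  rw [sum_dotProduct_self_sub_eq_of_sum_vecMulVec_eq hS_symm hx hab, le_add_iff_nonneg_right,
    left_eq_add]
  exact ⟨hnonneg, hzero⟩

end Real

end Matrix

/-- ZCA (symmetric) whitening optimality (Appendix B): with positive definite sample covariance
`C = (1/T) Σₜ xₜ xₜᵀ`, the outputs `y*ₜ = C^{-1/2} xₜ` (i) have identity sample covariance,
(ii) minimize `Σₜ ‖xₜ − yₜ‖²` among all families with identity sample covariance, and
(iii) are the unique such minimizer. -/
theorem zca_whitening_optimal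
    (N T : ℕ) (hT : 1 ≤ T)
    (x : Fin T → (Fin N → ℝ))
    (hC : Matrix.PosDef ((T : ℝ)⁻¹ • ∑ t, vecMulVec (x t) (x t)))
    (ystar : Fin T → (Fin N → ℝ))
    (hystar : ∀ t, ystar t = (hC.posSemidef.sqrt)⁻¹.mulVec (x t)) :
    ((T : ℝ)⁻¹ • ∑ t, vecMulVec (ystar t) (ystar t) = (1 : Matrix (Fin N) (Fin N) ℝ)) ∧
    (∀ y : Fin T → (Fin N → ℝ),
      (T : ℝ)⁻¹ • ∑ t, vecMulVec (y t) (y t) = (1 : Matrix (Fin N) (Fin N) ℝ) →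
      ((∑ t, (x t - ystar t) ⬝ᵥ (x t - ystar t) ≤ ∑ t, (x t - y t) ⬝ᵥ (x t - y t)) ∧
       (∑ t, (x t - ystar t) ⬝ᵥ (x t - ystar t) = ∑ t, (x t - y t) ⬝ᵥ (x t - y t) ↔
         y = ystar))) := by
  set S := hC.posSemidef.sqrt
  have hS : S.PosDef := hC.posDef_sqrt
  have hS_det : IsUnit S.det := (isUnit_iff_isUnit_det S).mp hS.isUnit
  have hS_symm : Sᵀ = S := (isHermitian_iff_isSymm.mp hS.isHermitian).eq
  have hx (t : Fin T) : x t = S *ᵥ ystar t := by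
    rw [hystar, mulVec_mulVec, mul_nonsing_inv S hS_det, one_mulVec]
  have hwhite : (T : ℝ)⁻¹ • ∑ t, vecMulVec (ystar t) (ystar t) = 1 := by
    simp only [hystar, sum_vecMulVec_mulVec, transpose_nonsing_inv, hS_symm]
    calc _ = S⁻¹ * (S * S) * S⁻¹ := by
          rw [hC.posSemidef.sqrt_mul_self, Matrix.mul_smul, Matrix.smul_mul]
      _ = (S⁻¹ * S) * (S * S⁻¹) := by simp only [Matrix.mul_assoc]
      _ = 1 := by rw [nonsing_inv_mul S hS_det, mul_nonsing_inv S hS_det, Matrix.one_mul]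
  have hT0 : (T : ℝ)⁻¹ ≠ 0 := inv_ne_zero (Nat.cast_ne_zero.mpr (by omega))
  refine ⟨hwhite, fun y hy => hS.sum_dotProduct_self_sub_le_and_eq_iff hx ?_⟩
  exact smul_right_injective _ hT0 (hy.trans hwhite.symm)

end
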